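/- arXiv:2205.13245 — 2 statements merged into one kernel-verified Lean document; each statement's English description precedes it below -/
import Mathlib

section
/- Let m ≤ n and let A_1, …, A_L be real symmetric m×m matrices. The family {A_1,…,A_L} is T_{m,n}-SD if and only if it is SD. -/
/-!
Padding `Pᵀ` with zero rows turns an `SL_m` diagonalizer `P` into a `T_{m,n}` one. Conversely,
if `det (Qᵀ Q) = 1` the rows of `Q` span `ℝᵐ`, so `m` of them form an invertible matrix `M`;
`M Aᵢ Mᵀ` is a principal submatrix of the diagonal `Q Aᵢ Qᵀ`, and rescaling one column of `Mᵀ`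
brings its determinant to `1`.
-/

open Matrix

namespace Matrix

variable {R K : Type*} {m n : Type*}

theorem range_vecMulLinear_eq_top_of_isUnit_det_transpose_mul_self [CommRing R] [Fintype n]
    [Fintype m] [DecidableEq m] (Q : Matrix n m R) (h : IsUnit (Qᵀ * Q).det) :
    LinearMap.range Q.vecMulLinear = ⊤ := by
  refine LinearMap.range_eq_top.mpr fun y => ⟨(y ᵥ* (Qᵀ * Q)⁻¹) ᵥ* Qᵀ, ?_⟩
  change ((y ᵥ* (Qᵀ * Q)⁻¹) ᵥ* Qᵀ) ᵥ* Q = y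
  rw [vecMul_vecMul, vecMul_vecMul, nonsing_inv_mul _ h, vecMul_one]

theorem exists_injective_isUnit_submatrix_of_span_row_eq_top [Field K] [Fintype m]
    [DecidableEq m] (Q : Matrix n m K) (hQ : Submodule.span K (Set.range Q.row) = ⊤) :
    ∃ f : m → n, Function.Injective f ∧ IsUnit (Q.submatrix f id) := by
  obtain ⟨κ, a, ha, hspan, hli⟩ := exists_linearIndependent' K Q.row
  let b : Module.Basis κ K (m → K) := .mk hli (by rw [hspan, hQ])
  let e : κ ≃ m := b.indexEquiv (Pi.basisFun K m)
  refine ⟨a ∘ e.symm, ha.comp e.symm.injective, ?_⟩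
  exact linearIndependent_rows_iff_isUnit.mp (hli.comp e.symm e.symm.injective)

theorem IsDiag.one_submatrix_mul_mul_transpose [Semiring R] [Fintype m] [DecidableEq n]
    {X : Matrix m m R} (hX : X.IsDiag) (e : m → n) :
    ((1 : Matrix n n R).submatrix id e * X * ((1 : Matrix n n R).submatrix id e)ᵀ).IsDiag := by
  classical
  intro a b hab
  rw [← hX.diagonal_diag]
  refine Finset.sum_eq_zero fun j _ => ?_
  simp only [mul_diagonal, transpose_apply, submatrix_apply, id, one_apply]
  split_ifs with ha hb <;> simp_all

theorem exists_det_eq_one_transpose_mul_mul_isDiag [Field K] [Fintype m] [DecidableEq m]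
    {ι : Type*} (A : ι → Matrix m m K) (P : Matrix m m K) (hP : P.det ≠ 0)
    (hdiag : ∀ i, (Pᵀ * A i * P).IsDiag) :
    ∃ P' : Matrix m m K, P'.det = 1 ∧ ∀ i, (P'ᵀ * A i * P').IsDiag := by
  cases isEmpty_or_nonempty m with
  | inl _ => exact ⟨P, det_isEmpty, hdiag⟩
  | inr hm =>
    obtain ⟨j⟩ := hm
    let D : Matrix m m K := diagonal (Function.update 1 j P.det⁻¹)
    refine ⟨P * D, ?_, fun i => ?_⟩
    · rw [det_mul, det_diagonal, Finset.prod_update_of_mem (Finset.mem_univ j)]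
      simp [hP]
    · have : (P * D)ᵀ * A i * (P * D) = D * (Pᵀ * A i * P) * D := by
        simp only [D, transpose_mul, diagonal_transpose, Matrix.mul_assoc]
      rw [this, ← (hdiag i).diagonal_diag, diagonal_mul_diagonal, diagonal_mul_diagonal]
      exact isDiag_diagonal _

theorem exists_isUnit_det_transpose_mul_mul_isDiag_of_mul_mul_transpose [Field K] [Fintype m]
    [Fintype n] [DecidableEq m] {ι : Type*} (A : ι → Matrix m m K) (Q : Matrix n m K)
    (hQ : IsUnit (Qᵀ * Q).det) (hdiag : ∀ i, (Q * A i * Qᵀ).IsDiag) :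
    ∃ P : Matrix m m K, IsUnit P.det ∧ ∀ i, (Pᵀ * A i * P).IsDiag := by
  obtain ⟨f, hf, hM⟩ := exists_injective_isUnit_submatrix_of_span_row_eq_top Q
    (by rw [← range_vecMulLinear, range_vecMulLinear_eq_top_of_isUnit_det_transpose_mul_self Q hQ])
  refine ⟨(Q.submatrix f id)ᵀ, by rwa [det_transpose, ← isUnit_iff_isUnit_det], fun i => ?_⟩
  have : (Q.submatrix f id)ᵀᵀ * A i * (Q.submatrix f id)ᵀ = (Q * A i * Qᵀ).submatrix f f := by
    ext; rfl
  rw [this]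
  exact (hdiag i).submatrix hf

theorem exists_det_transpose_mul_self_eq_one_mul_mul_transpose_isDiag [CommRing R] [Fintype m]
    [Fintype n] [DecidableEq m] [DecidableEq n] {ι : Type*} (A : ι → Matrix m m R) {e : m → n}
    (he : Function.Injective e) (P : Matrix m m R) (hP : P.det = 1)
    (hdiag : ∀ i, (Pᵀ * A i * P).IsDiag) :
    ∃ Q : Matrix n m R, (Qᵀ * Q).det = 1 ∧ ∀ i, (Q * A i * Qᵀ).IsDiag := by
  set E : Matrix n m R := (1 : Matrix n n R).submatrix id e
  have hEE : Eᵀ * E = 1 := by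
    rw [transpose_submatrix, transpose_one]
    change (1 : Matrix n n R).submatrix e (Equiv.refl n) * E = 1
    rw [one_submatrix_mul]
    exact submatrix_one e he
  refine ⟨E * Pᵀ, ?_, fun i => ?_⟩
  · rw [transpose_mul, transpose_transpose, Matrix.mul_assoc, ← Matrix.mul_assoc Eᵀ, hEE,
      Matrix.one_mul, det_mul, det_transpose, hP, mul_one]
  · have : E * Pᵀ * A i * (E * Pᵀ)ᵀ = E * (Pᵀ * A i * P) * Eᵀ := by
      simp only [transpose_mul, transpose_transpose, Matrix.mul_assoc]
    rw [this]
    exact (hdiag i).one_submatrix_mul_mul_transpose e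

end Matrix

theorem stmt_1_general (m n L : ℕ) (hmn : m ≤ n)
    (A : Fin L → Matrix (Fin m) (Fin m) ℝ) :
    (∃ P : Matrix (Fin n) (Fin m) ℝ, (Pᵀ * P).det = 1 ∧ ∀ i, (P * A i * Pᵀ).IsDiag) ↔
    (∃ P : Matrix (Fin m) (Fin m) ℝ, P.det = 1 ∧ ∀ i, (Pᵀ * A i * P).IsDiag) := by
  constructor
  · rintro ⟨Q, hQ, hdiag⟩
    obtain ⟨P, hP, hPdiag⟩ :=
      exists_isUnit_det_transpose_mul_mul_isDiag_of_mul_mul_transpose A Q (by simp [hQ]) hdiag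
    exact exists_det_eq_one_transpose_mul_mul_isDiag A P hP.ne_zero hPdiag
  · rintro ⟨P, hP, hdiag⟩
    exact exists_det_transpose_mul_self_eq_one_mul_mul_transpose_isDiag A
      (Fin.castLE_injective hmn) P hP hdiag

theorem stmt_1 (m n L : ℕ) (hmn : m ≤ n)
    (A : Fin L → Matrix (Fin m) (Fin m) ℝ) (hA : ∀ i, (A i).IsSymm) :
    (∃ P : Matrix (Fin n) (Fin m) ℝ, (Pᵀ * P).det = 1 ∧ ∀ i, (P * A i * Pᵀ).IsDiag) ↔
    (∃ P : Matrix (Fin m) (Fin m) ℝ, P.det = 1 ∧ ∀ i, (Pᵀ * A i * P).IsDiag) :=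
  stmt_1_general m n L hmn A
end

section
/- Let A be a real symmetric m×m matrix and let (P_k) be a sequence of invertible matrices in ℝ^{m×m} such that every off-diagonal entry of P_k⁻¹ A P_k tends to 0 as k → ∞. Then the diagonal entries of P_k⁻¹ A P_k are uniformly bounded in k. -/
/-!
Write `B k = P k⁻¹ * A * P k`. Similarity preserves `trace (B k * B k) = trace (A * A)`, and
`trace (B * B) = ∑ i, B i i ^ 2 + ∑_{i ≠ j} B i j * B j i`. The off-diagonal products tend to `0`,
so `∑ i, B k i i ^ 2` converges to `trace (A * A)`; a convergent sequence is bounded, and each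
diagonal entry squared is at most that sum.
-/

open Matrix Filter Topology

namespace Matrix

variable {n R : Type*} [Fintype n] [DecidableEq n]

theorem trace_mul_self_eq_sum_sq_diag_add_sum_offDiag [CommSemiring R] (B : Matrix n n R) :
    trace (B * B) = ∑ i, B i i ^ 2 + ∑ i, ∑ j ∈ Finset.univ.erase i, B i j * B j i := by
  simp only [trace, diag, mul_apply, sq, ← Finset.sum_add_distrib]
  exact Finset.sum_congr rfl fun i _ => (Finset.add_sum_erase _ _ (Finset.mem_univ i)).symm

theorem trace_conj_mul_self [CommRing R] {P : Matrix n n R} (hP : IsUnit P.det)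
    (A : Matrix n n R) : trace (P⁻¹ * A * P * (P⁻¹ * A * P)) = trace (A * A) := by
  have hsq : P⁻¹ * A * P * (P⁻¹ * A * P) = P⁻¹ * (A * A) * P := by
    simp only [Matrix.mul_assoc, mul_nonsing_inv_cancel_left P _ hP]
  rw [hsq, trace_conj' ((isUnit_iff_isUnit_det P).2 hP)]

theorem tendsto_sum_sq_diag_of_tendsto_offDiag [CommRing R] [TopologicalSpace R]
    [IsTopologicalRing R] {ι : Type*} {l : Filter ι} {B : ι → Matrix n n R} {c : R}
    (htrace : ∀ k, trace (B k * B k) = c)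
    (hoff : ∀ i j, i ≠ j → Tendsto (fun k => B k i j) l (𝓝 0)) :
    Tendsto (fun k => ∑ i, B k i i ^ 2) l (𝓝 c) := by
  have hoffSum : Tendsto (fun k => ∑ i, ∑ j ∈ Finset.univ.erase i, B k i j * B k j i) l (𝓝 0) := by
    have h := tendsto_finsetSum Finset.univ fun i _ => tendsto_finsetSum (Finset.univ.erase i) fun j hj =>
      (hoff i j (Finset.ne_of_mem_erase hj).symm).mul (hoff j i (Finset.ne_of_mem_erase hj))
    simpa only [mul_zero, Finset.sum_const_zero] using h
  have hdiag : ∀ k, ∑ i, B k i i ^ 2 = c - ∑ i, ∑ j ∈ Finset.univ.erase i, B k i j * B k j i :=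
    fun k => by rw [← htrace k, trace_mul_self_eq_sum_sq_diag_add_sum_offDiag]; ring
  simpa [hdiag] using tendsto_const_nhds.sub hoffSum

end Matrix

theorem exists_abs_le_of_tendsto_sum_sq {n : Type*} [Fintype n] {f : ℕ → n → ℝ} {c : ℝ}
    (hf : Tendsto (fun k => ∑ i, f k i ^ 2) atTop (𝓝 c)) : ∃ M, ∀ k i, |f k i| ≤ M := by
  obtain ⟨M, hM⟩ := hf.bddAbove_range
  refine ⟨√M, fun k i => Real.abs_le_sqrt ?_⟩
  calc f k i ^ 2 ≤ ∑ j, f k j ^ 2 :=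
        Finset.single_le_sum (f := fun j => f k j ^ 2) (fun j _ => sq_nonneg _) (Finset.mem_univ i)
    _ ≤ M := hM ⟨k, rfl⟩

theorem stmt_18_general (m : ℕ) (A : Matrix (Fin m) (Fin m) ℝ)
    (P : ℕ → Matrix (Fin m) (Fin m) ℝ) (hinv : ∀ k, IsUnit (P k).det)
    (hoff : ∀ p q : Fin m, p ≠ q →
      Tendsto (fun k => ((P k)⁻¹ * A * P k) p q) atTop (𝓝 (0 : ℝ))) :
    ∃ M : ℝ, ∀ k, ∀ i : Fin m, |((P k)⁻¹ * A * P k) i i| ≤ M :=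
  exists_abs_le_of_tendsto_sum_sq <|
    tendsto_sum_sq_diag_of_tendsto_offDiag (fun k => trace_conj_mul_self (hinv k) A) hoff

theorem stmt_18 (m : ℕ) (A : Matrix (Fin m) (Fin m) ℝ) (hA : A.IsSymm)
    (P : ℕ → Matrix (Fin m) (Fin m) ℝ) (hinv : ∀ k, IsUnit (P k).det)
    (hoff : ∀ p q : Fin m, p ≠ q →
      Tendsto (fun k => ((P k)⁻¹ * A * P k) p q) atTop (𝓝 (0 : ℝ))) :
    ∃ M : ℝ, ∀ k, ∀ i : Fin m, |((P k)⁻¹ * A * P k) i i| ≤ M :=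
  stmt_18_general m A P hinv hoff
end
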